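/- arXiv:1512.07500 — 4 statements merged into one kernel-verified Lean document; each statement's English description precedes it below -/
import Mathlib

section
/- If k is a complex number with Im k > 0, x₁ > 0, x₂ > 0, and y, z are real, then ∫_{-∞}^{∞} G(x₁, y - y')·G(x₂, y' - z) dy' = G(x₁ + x₂, y - z) (the Chapman–Kolmogorov / semigroup property of the parabolic Green's function). -/
/-!
With `κ = -i k`, which lies in the right half-plane because `Re κ = Im k > 0`, the kernel is the
heat kernel with complex diffusivity, `G(x, y) = √(κ / (2πx)) · exp (-κ y² / (2x))`.
The product of two such Gaussians in `y'` is again a Gaussian, so completing the square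
(`integral_cexp_quadratic`) evaluates the integral. The only delicate point is the principal
square root: it splits off positive real factors, and `√(κ⁻¹) = (√κ)⁻¹` because `arg κ ≠ π`.
-/

open MeasureTheory

noncomputable def parabolicG (k : ℂ) (x y : ℝ) : ℂ :=
  (k / (2 * (Real.pi : ℂ) * Complex.I * (x : ℂ))) ^ ((1 : ℂ) / 2) *
    Complex.exp (Complex.I * k * (y : ℂ) ^ 2 / (2 * (x : ℂ)))

open Complex Real

theorem Complex.ofReal_mul_cpow_of_nonneg {r : ℝ} (hr : 0 ≤ r) (w s : ℂ) :
    ((r : ℂ) * w) ^ s = (r : ℂ) ^ s * w ^ s := by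
  rcases eq_or_ne s 0 with rfl | hs
  · simp
  rcases hr.eq_or_lt with rfl | hr
  · simp [zero_cpow hs]
  rcases eq_or_ne w 0 with rfl | hw
  · simp [zero_cpow hs]
  have hr' : (r : ℂ) ≠ 0 := ofReal_ne_zero.mpr hr.ne'
  rw [cpow_def_of_ne_zero (mul_ne_zero hr' hw), log_ofReal_mul hr hw, ofReal_log hr.le,
    add_mul, exp_add, ← cpow_def_of_ne_zero hr', ← cpow_def_of_ne_zero hw]

theorem integral_cexp_neg_mul_sub_sq_mul_cexp_neg_mul_sub_sq {a₁ a₂ : ℂ}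
    (ha : 0 < (a₁ + a₂).re) (y z : ℝ) :
    ∫ t : ℝ, cexp (-a₁ * (y - t) ^ 2) * cexp (-a₂ * (t - z) ^ 2) =
      (π / (a₁ + a₂)) ^ (1 / 2 : ℂ) * cexp (-(a₁ * a₂ / (a₁ + a₂)) * (y - z) ^ 2) := by
  have ha₀ : a₁ + a₂ ≠ 0 := fun h => by simp [h] at ha
  have hexp (t : ℝ) : cexp (-a₁ * (y - t) ^ 2) * cexp (-a₂ * (t - z) ^ 2) =
      cexp (-(a₁ + a₂) * t ^ 2 + 2 * (a₁ * y + a₂ * z) * t - (a₁ * y ^ 2 + a₂ * z ^ 2)) := by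
    rw [← Complex.exp_add]; ring_nf
  simp_rw [hexp, sub_eq_add_neg _ (a₁ * _ + _)]
  rw [integral_cexp_quadratic (by rw [neg_re, neg_lt_zero]; exact ha), neg_neg]
  congr 2
  field_simp
  ring

noncomputable def complexHeatKernel (κ : ℂ) (x y : ℝ) : ℂ :=
  (κ / (2 * π * x)) ^ (1 / 2 : ℂ) * cexp (-(κ / (2 * x)) * y ^ 2)

theorem complexHeatKernel_constant_mul {κ : ℂ} (hκ : 0 < κ.re) {x₁ x₂ : ℝ}
    (hx₁ : 0 < x₁) (hx₂ : 0 < x₂) :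
    (κ / (2 * π * x₁)) ^ (1 / 2 : ℂ) * (κ / (2 * π * x₂)) ^ (1 / 2 : ℂ) *
        (π / (κ / (2 * x₁) + κ / (2 * x₂))) ^ (1 / 2 : ℂ) =
      (κ / (2 * π * ((x₁ + x₂ : ℝ) : ℂ))) ^ (1 / 2 : ℂ) := by
  have hκ₀ : κ ≠ 0 := fun h => by simp [h] at hκ
  have hx₁' : (x₁ : ℂ) ≠ 0 := ofReal_ne_zero.mpr hx₁.ne'
  have hx₂' : (x₂ : ℂ) ≠ 0 := ofReal_ne_zero.mpr hx₂.ne'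
  have hx₁₂ : (x₁ : ℂ) + x₂ ≠ 0 := by exact_mod_cast (add_pos hx₁ hx₂).ne'
  have hdiv (x : ℝ) : κ / (2 * π * x) = ((2 * π * x)⁻¹ : ℝ) * κ := by push_cast; ring
  have hsum : π / (κ / (2 * x₁) + κ / (2 * x₂)) = (2 * π * x₁ * x₂ / (x₁ + x₂) : ℝ) * κ⁻¹ := by
    push_cast; field_simp; rw [add_comm (x₂ : ℂ), div_self hx₁₂]
  have harg : κ.arg ≠ π := fun h => by linarith [(arg_eq_pi_iff.mp h).1]
  have hsqrt : κ ^ (1 / 2 : ℂ) ≠ 0 := by simp [cpow_eq_zero_iff, hκ₀]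
  have hreal : (2 * π * (x₁ + x₂))⁻¹ =
      (2 * π * x₁)⁻¹ * (2 * π * x₂)⁻¹ * (2 * π * x₁ * x₂ / (x₁ + x₂)) := by
    field_simp
  rw [hdiv, hdiv, hdiv, hsum, ofReal_mul_cpow_of_nonneg (by positivity),
    ofReal_mul_cpow_of_nonneg (by positivity), ofReal_mul_cpow_of_nonneg (by positivity),
    ofReal_mul_cpow_of_nonneg (by positivity), inv_cpow _ _ harg, hreal, ofReal_mul,
    mul_cpow_ofReal_nonneg (by positivity) (by positivity), ofReal_mul,
    mul_cpow_ofReal_nonneg (by positivity) (by positivity)]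
  field_simp

theorem complexHeatKernel_chapman_kolmogorov {κ : ℂ} (hκ : 0 < κ.re) {x₁ x₂ : ℝ}
    (hx₁ : 0 < x₁) (hx₂ : 0 < x₂) (y z : ℝ) :
    ∫ t : ℝ, complexHeatKernel κ x₁ (y - t) * complexHeatKernel κ x₂ (t - z) =
      complexHeatKernel κ (x₁ + x₂) (y - z) := by
  have hx₁' : (x₁ : ℂ) ≠ 0 := ofReal_ne_zero.mpr hx₁.ne'
  have hx₂' : (x₂ : ℂ) ≠ 0 := ofReal_ne_zero.mpr hx₂.ne'
  have hsum : κ / (2 * x₁) + κ / (2 * x₂) = ((x₁ + x₂) / (2 * x₁ * x₂) : ℝ) * κ := by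
    push_cast; field_simp; ring
  have hre : 0 < (κ / (2 * x₁) + κ / (2 * x₂)).re := by
    rw [hsum, re_ofReal_mul]; positivity
  have hrate : κ / (2 * x₁) * (κ / (2 * x₂)) / (κ / (2 * x₁) + κ / (2 * x₂)) =
      κ / (2 * (x₁ + x₂ : ℝ)) := by
    rw [hsum]; push_cast; field_simp
  simp only [complexHeatKernel, ofReal_sub, mul_mul_mul_comm _ (cexp _)]
  rw [integral_const_mul, integral_cexp_neg_mul_sub_sq_mul_cexp_neg_mul_sub_sq hre, hrate,
    ← mul_assoc, complexHeatKernel_constant_mul hκ hx₁ hx₂]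

theorem parabolicG_eq_complexHeatKernel (k : ℂ) :
    parabolicG k = complexHeatKernel (-(I * k)) := by
  ext x y
  simp only [parabolicG, complexHeatKernel]
  congr 2
  · rw [show (2 : ℂ) * π * I * x = I * (2 * π * x) by ring, ← div_div, div_I]
    ring
  · ring

/-- Chapman–Kolmogorov / semigroup property of the parabolic Green's function:
if `Im k > 0`, `x₁ > 0`, `x₂ > 0` and `y, z` are real, then
`∫_{-∞}^{∞} G(x₁, y - y')·G(x₂, y' - z) dy' = G(x₁ + x₂, y - z)`. -/
theorem parabolicG_chapman_kolmogorov (k : ℂ) (hk : 0 < k.im)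
    (x₁ x₂ : ℝ) (hx₁ : 0 < x₁) (hx₂ : 0 < x₂) (y z : ℝ) :
    ∫ y' : ℝ, parabolicG k x₁ (y - y') * parabolicG k x₂ (y' - z)
      = parabolicG k (x₁ + x₂) (y - z) := by
  rw [parabolicG_eq_complexHeatKernel]
  exact complexHeatKernel_chapman_kolmogorov (by simpa using hk) hx₁ hx₂ y z
end

section
/- Let k be a complex number with Im k > 0 and let φ : ℝ → ℂ be bounded and continuous. Then lim_{x → 0+} ∫_{-∞}^{∞} G(x,y) φ(y) dy = φ(0); that is, G(x,·) is an approximate identity as x → 0+, so that G is the field of a unit point source at the origin. -/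
/-!
Substituting `y = √x u` turns `∫ G(x,y) φ(y) dy` into `∫ G(1,u) φ(√x u) du`, since `G` is
homogeneous: `G(x, √x u) = G(1,u) / √x`. For `Im k > 0`, `G(1,·)` is a complex Gaussian, hence
integrable, and its integral is `1` by the Gaussian integral formula. Dominated convergence
(with dominating function `C ‖G(1,·)‖`) then gives the limit `φ(0) ∫ G(1,u) du = φ(0)`.
-/

open MeasureTheory Filter

open Topology

open Complex in
theorem Complex.ofReal_mul_cpow {r : ℝ} (hr : 0 ≤ r) (z w : ℂ) :
    ((r : ℂ) * z) ^ w = (r : ℂ) ^ w * z ^ w := by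
  rcases eq_or_ne w 0 with rfl | hw
  · simp
  rcases hr.eq_or_lt with rfl | hr
  · simp [zero_cpow hw]
  rcases eq_or_ne z 0 with rfl | hz
  · simp [zero_cpow hw]
  have hr' : (r : ℂ) ≠ 0 := ofReal_ne_zero.mpr hr.ne'
  rw [cpow_def_of_ne_zero (mul_ne_zero hr' hz), log_ofReal_mul hr hz, add_mul, exp_add,
    cpow_def_of_ne_zero hr', cpow_def_of_ne_zero hz, ofReal_log hr.le]

lemma Complex.ofReal_cpow_half {r : ℝ} (hr : 0 ≤ r) :
    (r : ℂ) ^ ((1 : ℂ) / 2) = Real.sqrt r := by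
  rw [Real.sqrt_eq_rpow, Complex.ofReal_cpow hr]
  norm_num

lemma parabolicG_sqrt_mul (k : ℂ) {x : ℝ} (hx : 0 < x) (u : ℝ) :
    parabolicG k x (Real.sqrt x * u) = (Real.sqrt x : ℂ)⁻¹ * parabolicG k 1 u := by
  have hxC : (x : ℂ) ≠ 0 := Complex.ofReal_ne_zero.mpr hx.ne'
  have hscale : k / (2 * Real.pi * Complex.I * x)
      = (x⁻¹ : ℝ) * (k / (2 * Real.pi * Complex.I * (1 : ℝ))) := by
    push_cast
    field_simp
  have hexp : Complex.I * k * ((Real.sqrt x * u : ℝ) : ℂ) ^ 2 / (2 * x)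
      = Complex.I * k * (u : ℂ) ^ 2 / (2 * (1 : ℝ)) := by
    have : ((Real.sqrt x : ℝ) : ℂ) ^ 2 = x := by
      rw [← Complex.ofReal_pow, Real.sq_sqrt hx.le]
    push_cast
    rw [mul_pow, this]
    field_simp
  rw [parabolicG, parabolicG, hscale, hexp, Complex.ofReal_mul_cpow (inv_nonneg.2 hx.le),
    Complex.ofReal_cpow_half (inv_nonneg.2 hx.le), Real.sqrt_inv, Complex.ofReal_inv, mul_assoc]

lemma integral_parabolicG_mul (k : ℂ) {x : ℝ} (hx : 0 < x) (φ : ℝ → ℂ) :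
    ∫ y, parabolicG k x y * φ y = ∫ u, parabolicG k 1 u * φ (Real.sqrt x * u) := by
  have hs : 0 < Real.sqrt x := Real.sqrt_pos.2 hx
  have hsC : (Real.sqrt x : ℂ) ≠ 0 := Complex.ofReal_ne_zero.mpr hs.ne'
  symm
  calc ∫ u, parabolicG k 1 u * φ (Real.sqrt x * u)
      = ∫ u, (Real.sqrt x : ℂ) * (parabolicG k x (Real.sqrt x * u) * φ (Real.sqrt x * u)) := by
        congr 1 with u
        rw [parabolicG_sqrt_mul k hx, mul_assoc, mul_inv_cancel_left₀ hsC]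
    _ = ∫ y, parabolicG k x y * φ y := by
        rw [integral_const_mul, Measure.integral_comp_mul_left (fun y => parabolicG k x y * φ y),
          abs_of_pos (inv_pos.2 hs), Complex.real_smul, Complex.ofReal_inv,
          mul_inv_cancel_left₀ hsC]

/-- `G(1,·)` in the form `c · exp(-b u²)`, `b = -ik/2`, of `integral_gaussian_complex`. -/
lemma parabolicG_one_eq (k : ℂ) (u : ℝ) :
    parabolicG k 1 u = (k / (2 * Real.pi * Complex.I)) ^ ((1 : ℂ) / 2) *
      Complex.exp (-(-(Complex.I * k) / 2) * (u : ℂ) ^ 2) := by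
  simp only [parabolicG, Complex.ofReal_one, mul_one]
  congr 2
  ring

lemma integrable_parabolicG_one {k : ℂ} (hk : 0 < k.im) : Integrable (parabolicG k 1) := by
  have hb : 0 < (-(Complex.I * k) / 2).re := by simpa using hk
  rw [show parabolicG k 1 = _ from funext (parabolicG_one_eq k)]
  exact (integrable_cexp_neg_mul_sq hb).const_mul _

lemma re_div_two_pi_I (k : ℂ) : (k / (2 * Real.pi * Complex.I)).re = k.im / (2 * Real.pi) := by
  simp only [Complex.div_re, Complex.mul_re, Complex.mul_im, Complex.normSq_apply,
    Complex.ofReal_re, Complex.ofReal_im, Complex.I_re, Complex.I_im, Complex.re_ofNat,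
    Complex.im_ofNat]
  field_simp
  ring

lemma integral_parabolicG_one {k : ℂ} (hk : 0 < k.im) : ∫ u, parabolicG k 1 u = 1 := by
  set z := k / (2 * Real.pi * Complex.I)
  have hz_re : 0 < z.re := by
    rw [re_div_two_pi_I]
    positivity
  have hz : z ≠ 0 := fun h => by simp [h] at hz_re
  have hb : 0 < (-(Complex.I * k) / 2).re := by simpa using hk
  have hπb : (Real.pi : ℂ) / (-(Complex.I * k) / 2) = z⁻¹ := by
    have hk0 : k ≠ 0 := fun h => by simp [h] at hk
    simp only [z]
    field_simp
    ring_nf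
    rw [Complex.I_sq]
  have hz_arg : z.arg ≠ Real.pi := fun h => by linarith [(Complex.arg_eq_pi_iff.mp h).1]
  simp_rw [parabolicG_one_eq, integral_const_mul]
  rw [integral_gaussian_complex hb, hπb, Complex.inv_cpow _ _ hz_arg,
    mul_inv_cancel₀ fun h => hz (Complex.cpow_eq_zero_iff _ _ |>.mp h).1]

theorem tendsto_integral_mul_comp_smul {E : Type*} [NormedAddCommGroup E] [NormedSpace ℝ E]
    [MeasurableSpace E] [OpensMeasurableSpace E] {μ : Measure E} {g : E → ℂ}
    (hg : Integrable g μ) {φ : E → ℂ} (hφc : Continuous φ) {C : ℝ} (hC : ∀ y, ‖φ y‖ ≤ C) :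
    Tendsto (fun s : ℝ => ∫ u, g u * φ (s • u) ∂μ) (𝓝 0) (𝓝 ((∫ u, g u ∂μ) * φ 0)) := by
  rw [← integral_mul_const]
  refine tendsto_integral_filter_of_dominated_convergence (fun u => ‖g u‖ * C)
    (Eventually.of_forall fun s => hg.aestronglyMeasurable.mul ?_)
    (Eventually.of_forall fun s => ae_of_all _ fun u => ?_) (hg.norm.mul_const C)
    (ae_of_all _ fun u => ?_)
  · exact (hφc.comp (continuous_const_smul s)).aestronglyMeasurable
  · rw [norm_mul]
    exact mul_le_mul_of_nonneg_left (hC _) (norm_nonneg _)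
  · refine tendsto_const_nhds.mul ?_
    have hsu : Tendsto (fun s : ℝ => s • u) (𝓝 0) (𝓝 0) := by
      simpa using (tendsto_id (x := 𝓝 (0 : ℝ))).smul_const u
    exact (hφc.tendsto 0).comp hsu

/-- If `Im k > 0` and `φ : ℝ → ℂ` is bounded and continuous, then
`∫_{-∞}^{∞} G(x,y) φ(y) dy → φ(0)` as `x → 0+`: the parabolic Green's function is an
approximate identity, i.e. the field of a unit point source at the origin. -/
theorem parabolicG_approximate_identity (k : ℂ) (hk : 0 < k.im)
    (φ : ℝ → ℂ) (hφc : Continuous φ) (hφb : ∃ C : ℝ, ∀ y : ℝ, ‖φ y‖ ≤ C) :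
    Tendsto (fun x : ℝ => ∫ y : ℝ, parabolicG k x y * φ y)
      (nhdsWithin 0 (Set.Ioi 0)) (nhds (φ 0)) := by
  obtain ⟨C, hC⟩ := hφb
  have hsqrt : Tendsto Real.sqrt (𝓝[>] 0) (𝓝 0) := by
    simpa using (Real.continuous_sqrt.tendsto 0).mono_left nhdsWithin_le_nhds
  have hlim := (tendsto_integral_mul_comp_smul (integrable_parabolicG_one hk) hφc hC).comp hsqrt
  rw [integral_parabolicG_one hk, one_mul] at hlim
  refine hlim.congr' ?_
  filter_upwards [self_mem_nhdsWithin] with x hx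
  simp only [Function.comp_apply, smul_eq_mul, integral_parabolicG_mul k hx]
end

section
/- Let k be a complex number with Im k > 0, let X > 0, and let ψ, y be real. Then ∫_{-∞}^{∞} exp(ikψ y')·G(X, y - y') dy' = exp(-ikXψ²/2 + ikψ y); that is, convolution with the parabolic Green's function propagates the plane wave exp(ikψ y) over distance X into the plane wave exp(-ikXψ²/2 + ikψ y). -/
/-!
`G(X, ·)` is the normalized complex Gaussian `(-b/π)^{1/2} exp(b y²)` with `b = ik/(2X)`, and
`Re b < 0` because `Im k > 0`. Convolving `exp(c y')` with it is a Gaussian integral with a linear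
term, equal to `(-b/π)^{1/2} (π/(-b))^{1/2} exp(c y - c²/(4b))`; the two square roots cancel since
`Re(-b/π) > 0` keeps the principal branch away from its cut, and `c = ikψ` gives the claim.
-/

open MeasureTheory

open Complex

lemma Complex.cpow_mul_inv_cpow_self {z : ℂ} (hz : z ≠ 0) (harg : z.arg ≠ Real.pi) (s : ℂ) :
    z ^ s * z⁻¹ ^ s = 1 := by
  rw [inv_cpow z s harg, mul_inv_cancel₀ (by simp [cpow_eq_zero_iff, hz])]

theorem integral_cexp_mul_gaussian_kernel {b : ℂ} (hb : b.re < 0) (c : ℂ) (y : ℝ) :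
    ∫ y' : ℝ, cexp (c * y') * ((-b / Real.pi) ^ (1 / 2 : ℂ) * cexp (b * ((y - y' : ℝ) : ℂ) ^ 2))
      = cexp (c * y - c ^ 2 / (4 * b)) := by
  have hb0 : b ≠ 0 := by rintro rfl; simp at hb
  have hre : 0 < (-b / Real.pi).re := by
    rw [div_ofReal_re, neg_re]; exact div_pos (neg_pos.mpr hb) Real.pi_pos
  have harg : (-b / Real.pi).arg ≠ Real.pi := fun h ↦ by
    linarith [(arg_eq_pi_iff.mp h).1]
  calc ∫ y' : ℝ, cexp (c * y') * ((-b / Real.pi) ^ (1 / 2 : ℂ) * cexp (b * ((y - y' : ℝ) : ℂ) ^ 2))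
      = (-b / Real.pi) ^ (1 / 2 : ℂ) *
          ∫ y' : ℝ, cexp (b * y' ^ 2 + (c - 2 * b * y) * y' + b * y ^ 2) := by
        rw [← integral_const_mul]
        congr 1 with y'
        rw [mul_left_comm, ← exp_add]
        push_cast
        ring_nf
    _ = (-b / Real.pi) ^ (1 / 2 : ℂ) * (-b / Real.pi)⁻¹ ^ (1 / 2 : ℂ) *
          cexp (b * y ^ 2 - (c - 2 * b * y) ^ 2 / (4 * b)) := by
        rw [integral_cexp_quadratic hb, inv_div, ← mul_assoc]
    _ = cexp (c * y - c ^ 2 / (4 * b)) := by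
        rw [cpow_mul_inv_cpow_self (by simp [hb0]) harg, one_mul]
        congr 1
        field_simp
        ring

lemma parabolicG_eq_gaussian_kernel (k : ℂ) (x y : ℝ) :
    parabolicG k x y =
      (-(I * k / (2 * x)) / Real.pi) ^ (1 / 2 : ℂ) * cexp (I * k / (2 * x) * y ^ 2) := by
  have hdiv : k / (2 * Real.pi * I * x) = -(I * k / (2 * x)) / Real.pi := by
    simp only [div_eq_mul_inv, mul_inv, inv_I]
    ring
  rw [parabolicG, hdiv]
  congr 2
  ring

lemma re_I_mul_div_two_mul_neg {k : ℂ} (hk : 0 < k.im) {x : ℝ} (hx : 0 < x) :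
    (I * k / (2 * x)).re < 0 := by
  rw [show (2 * x : ℂ) = ((2 * x : ℝ) : ℂ) by push_cast; rfl, div_ofReal_re, I_mul_re]
  exact div_neg_of_neg_of_pos (neg_neg_of_pos hk) (by positivity)

/-- If `Im k > 0`, `X > 0` and `ψ, y` are real, then
`∫_{-∞}^{∞} exp(ikψy')·G(X, y - y') dy' = exp(-ikXψ²/2 + ikψy)`:
convolution with the parabolic Green's function propagates the plane wave `exp(ikψy)`
over a distance `X` into the plane wave `exp(-ikXψ²/2 + ikψy)`. -/
theorem parabolicG_propagates_plane_wave (k : ℂ) (hk : 0 < k.im)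
    (X : ℝ) (hX : 0 < X) (ψ y : ℝ) :
    ∫ y' : ℝ, Complex.exp (Complex.I * k * (ψ : ℂ) * (y' : ℂ)) * parabolicG k X (y - y')
      = Complex.exp (-(Complex.I * k * (X : ℂ) * (ψ : ℂ) ^ 2 / 2)
          + Complex.I * k * (ψ : ℂ) * (y : ℂ)) := by
  simp_rw [parabolicG_eq_gaussian_kernel,
    integral_cexp_mul_gaussian_kernel (re_I_mul_div_two_mul_neg hk hX)]
  congr 1
  field_simp
  ring
end

section
/- (Strength of the monopole scatterer h_D.) Let k be a complex number with Im k > 0 and let q > 0. Then 4·∫_0^{∞} ∫_0^{∞} G(q, y + y') dy' dy = 2·sqrt(2iq/(πk)), where the square root on the right is the principal branch; equivalently, h_D := −4·∫_0^{∞} ∫_0^{∞} G(q, y + y') dy' dy = −2·sqrt(2iq/(πk)). -/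
/-!
With `c = k / (2πiq)`, which has `Re c = Im k / (2πq) > 0`, the Green's function is the
Gaussian `G(q, u) = √c · exp(-πc u²)`. Fubini turns the double integral into the first moment
`∫₀^∞ u G(q, u) du = √c / (2πc)`. Since `2iq / (πk) = (π√c)⁻²` and `π√c` has positive real
part, the principal square root of `2iq / (πk)` is `(π√c)⁻¹`, and `4√c / (2πc) = 2 (π√c)⁻¹`.
-/

open MeasureTheory

open Set Complex
open scoped Real

section

variable {E : Type*} [NormedAddCommGroup E] [NormedSpace ℝ E]

theorem integral_Ioi_zero_comp_add_left (f : ℝ → E) (y : ℝ) :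
    ∫ y' in Ioi 0, f (y + y') = ∫ u in Ioi y, f u := by
  rw [← (measurePreserving_add_left volume y).setIntegral_image_emb
    (measurableEmbedding_addLeft y), image_const_add_Ioi, add_zero]

variable [CompleteSpace E]

theorem integral_Ioi_integral_Ioi_eq_integral_smul {f : ℝ → E}
    (hf : IntegrableOn (fun u ↦ u • f u) (Ioi 0)) :
    ∫ y in Ioi 0, ∫ u in Ioi y, f u = ∫ u in Ioi 0, u • f u := by
  set F : ℝ → ℝ → E := fun y u ↦ (Ioi y).indicator f u
  have hF_swap (y u : ℝ) : F y u = (Iio u).indicator (fun _ ↦ f u) y := by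
    simp only [F, indicator, mem_Ioi, mem_Iio]
  have hf_meas : AEStronglyMeasurable f (volume.restrict (Ioi 0)) := by
    refine (measurable_inv.aestronglyMeasurable.smul hf.1).congr ?_
    filter_upwards [ae_restrict_mem measurableSet_Ioi] with u (hu : 0 < u)
    simp [smul_smul, hu.ne']
  have hF_meas : AEStronglyMeasurable (Function.uncurry F)
      ((volume.restrict (Ioi 0)).prod (volume.restrict (Ioi 0))) := by
    have : Function.uncurry F = {p : ℝ × ℝ | p.1 < p.2}.indicator (fun p ↦ f p.2) := by
      ext ⟨y, u⟩
      simp [hF_swap, indicator]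
    rw [this]
    exact (hf_meas.comp_quasiMeasurePreserving Measure.quasiMeasurePreserving_snd).indicator
      (measurableSet_lt measurable_fst measurable_snd)
  have hF_int : Integrable (Function.uncurry F)
      ((volume.restrict (Ioi 0)).prod (volume.restrict (Ioi 0))) := by
    refine (integrable_prod_iff' hF_meas).2 ⟨ae_of_all _ fun u ↦ ?_, hf.norm.congr ?_⟩
    · simp only [Function.uncurry_apply_pair, hF_swap]
      refine (integrable_indicator_iff measurableSet_Iio).2 (integrableOn_const ?_)
      rw [Measure.restrict_apply measurableSet_Iio, Iio_inter_Ioi]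
      simp
    · filter_upwards [ae_restrict_mem measurableSet_Ioi] with u (hu : 0 < u)
      simp only [Function.uncurry_apply_pair, hF_swap, norm_indicator_eq_indicator_norm]
      rw [setIntegral_indicator measurableSet_Iio, setIntegral_const, Ioi_inter_Iio,
        Real.volume_real_Ioo_of_le hu.le, sub_zero, norm_smul, Real.norm_of_nonneg hu.le,
        smul_eq_mul]
  calc ∫ y in Ioi 0, ∫ u in Ioi y, f u
      = ∫ y in Ioi 0, ∫ u in Ioi 0, F y u := by
        refine setIntegral_congr_fun measurableSet_Ioi fun y (hy : 0 < y) ↦ ?_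
        rw [setIntegral_indicator measurableSet_Ioi, inter_eq_right.2 (Ioi_subset_Ioi hy.le)]
    _ = ∫ u in Ioi 0, ∫ y in Ioi 0, F y u := integral_integral_swap hF_int
    _ = ∫ u in Ioi 0, u • f u := by
        refine setIntegral_congr_fun measurableSet_Ioi fun u (hu : 0 < u) ↦ ?_
        simp_rw [hF_swap]
        rw [setIntegral_indicator measurableSet_Iio, setIntegral_const, Ioi_inter_Iio,
          Real.volume_real_Ioo_of_le hu.le, sub_zero]

end

theorem re_cpow_inv_two_pos {c : ℂ} (hc : 0 < c.re) : 0 < (c ^ (2⁻¹ : ℂ)).re := by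
  rw [cpow_inv_two_re]
  exact Real.sqrt_pos.2 (by linarith [abs_re_le_norm c, le_abs_self c.re])

theorem inv_ofReal_sq_mul_cpow_inv_two {c : ℂ} (hc : 0 < c.re) {r : ℝ} (hr : 0 < r) :
    ((r ^ 2 * c)⁻¹ : ℂ) ^ (2⁻¹ : ℂ) = (r * c ^ (2⁻¹ : ℂ))⁻¹ := by
  have hroot : 0 < ((r * c ^ (2⁻¹ : ℂ))⁻¹ : ℂ).re := by
    have hs := re_cpow_inv_two_pos hc
    have hs0 : c ^ (2⁻¹ : ℂ) ≠ 0 := fun h ↦ by simp [h] at hs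
    rw [inv_re, re_ofReal_mul]
    exact div_pos (mul_pos hr hs) (normSq_pos.2 (mul_ne_zero (ofReal_ne_zero.2 hr.ne') hs0))
  rw [← sq_cpow_two_inv hroot, inv_pow, mul_pow, cpow_ofNat_inv_pow]

theorem parabolicG_eq_mul_cexp (k : ℂ) (x y : ℝ) :
    parabolicG k x y = (k / (2 * π * I * x)) ^ (2⁻¹ : ℂ) *
      cexp (-(π * (k / (2 * π * I * x))) * (y : ℂ) ^ 2) := by
  rw [parabolicG, one_div]
  congr 2
  field_simp
  rw [I_sq]
  ring

theorem re_div_two_pi_I_mul_pos {k : ℂ} (hk : 0 < k.im) {x : ℝ} (hx : 0 < x) :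
    0 < (k / (2 * π * I * x)).re := by
  have : k / (2 * π * I * x) = ((2 * π * x)⁻¹ : ℝ) * (-I * k) := by
    push_cast
    field_simp
    rw [I_sq]
    ring
  rw [this, re_ofReal_mul, show (-I * k).re = k.im by simp]
  positivity

theorem integral_Ioi_integral_Ioi_parabolicG {k : ℂ} (hk : 0 < k.im) {q : ℝ} (hq : 0 < q) :
    ∫ y in Ioi 0, ∫ y' in Ioi 0, parabolicG k q (y + y') =
      (k / (2 * π * I * q)) ^ (2⁻¹ : ℂ) * (2 * (π * (k / (2 * π * I * q))))⁻¹ := by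
  set c := k / (2 * π * I * q)
  have ha : 0 < (π * c).re := by
    rw [re_ofReal_mul]
    exact mul_pos Real.pi_pos (re_div_two_pi_I_mul_pos hk hq)
  have hG : (fun u : ℝ ↦ u • parabolicG k q u) =
      fun u : ℝ ↦ c ^ (2⁻¹ : ℂ) * (u * cexp (-(π * c) * (u : ℂ) ^ 2)) := by
    ext u
    rw [parabolicG_eq_mul_cexp, real_smul]
    ring
  have hint : IntegrableOn (fun u : ℝ ↦ u • parabolicG k q u) (Ioi 0) := by
    rw [hG]
    exact ((integrable_mul_cexp_neg_mul_sq ha).const_mul _).integrableOn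
  simp_rw [integral_Ioi_zero_comp_add_left, integral_Ioi_integral_Ioi_eq_integral_smul hint, hG,
    integral_const_mul, integral_mul_cexp_neg_mul_sq ha]

/-- Strength of the monopole scatterer `h_D`: for `Im k > 0` and `q > 0`,
`4·∫_0^∞∫_0^∞ G(q, y+y') dy' dy = 2·sqrt(2iq/(πk))`, equivalently
`h_D = −4·∫_0^∞∫_0^∞ G(q, y+y') dy' dy = −2·sqrt(2iq/(πk))`. -/
theorem monopole_strength_hD (k : ℂ) (hk : 0 < k.im) (q : ℝ) (hq : 0 < q) :
    4 * (∫ y in Set.Ioi (0 : ℝ), ∫ y' in Set.Ioi (0 : ℝ), parabolicG k q (y + y'))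
      = 2 * (2 * Complex.I * (q : ℂ) / ((Real.pi : ℂ) * k)) ^ ((1 : ℂ) / 2)
    ∧ -(4 * (∫ y in Set.Ioi (0 : ℝ), ∫ y' in Set.Ioi (0 : ℝ), parabolicG k q (y + y')))
      = -(2 * (2 * Complex.I * (q : ℂ) / ((Real.pi : ℂ) * k)) ^ ((1 : ℂ) / 2)) := by
  have hc := re_div_two_pi_I_mul_pos hk hq
  have hk0 : k ≠ 0 := by rintro rfl; simp at hk
  have hw : 2 * I * q / (π * k) = ((π : ℂ) ^ 2 * (k / (2 * π * I * q)))⁻¹ := by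
    field_simp
  have key : 4 * (∫ y in Ioi 0, ∫ y' in Ioi 0, parabolicG k q (y + y')) =
      2 * (2 * I * q / (π * k)) ^ ((1 : ℂ) / 2) := by
    rw [integral_Ioi_integral_Ioi_parabolicG hk hq, one_div, hw,
      inv_ofReal_sq_mul_cpow_inv_two hc Real.pi_pos]
    have hs0 : (k / (2 * π * I * q)) ^ (2⁻¹ : ℂ) ≠ 0 := fun h ↦ by
      simpa [h] using re_cpow_inv_two_pos hc
    have hsq : ((k / (2 * π * I * q)) ^ (2⁻¹ : ℂ)) ^ 2 = k / (2 * π * I * q) :=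
      cpow_ofNat_inv_pow _ 2
    generalize (k / (2 * π * I * q)) ^ (2⁻¹ : ℂ) = s at hs0 hsq ⊢
    rw [← hsq]
    field_simp
    ring
  exact ⟨key, congrArg Neg.neg key⟩
end
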